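/- Let X follow a p-variate Student's t distribution with location ξ, positive definite scale matrix Ω, and degrees of freedom ν > 0, and suppose the truncation limits α, β ∈ ([−∞,∞])^p are such that both limits are finite in p₁ coordinates and at least one limit is infinite in the remaining p₂ = p − p₁ coordinates. Then for k ∈ ℕ^p with support only on the coordinates with infinite limits, E[X^k | α ≤ X ≤ β] exists if and only if ∑ᵢ kᵢ < ν + p₁. -/

import Mathlib

open MeasureTheory Matrix
open scoped ENNReal

/-- The `n`-variate Student's `t` density with location `ξ`, scale matrix `S` and `ν` degrees of
freedom. -/
noncomputable def mvtDensity {n : ℕ} (ξ : Fin n → ℝ) (S : Matrix (Fin n) (Fin n) ℝ)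
    (ν : ℝ) (x : Fin n → ℝ) : ℝ :=
  Real.Gamma ((ν + (n : ℝ)) / 2) /
      (Real.Gamma (ν / 2) * (ν * Real.pi) ^ ((n : ℝ) / 2) * Real.sqrt S.det) *
    (1 + dotProduct (x - ξ) (S⁻¹.mulVec (x - ξ)) / ν) ^ (-(ν + (n : ℝ)) / 2)


lemma quad_upper_bound {n : ℕ} (M : Matrix (Fin n) (Fin n) ℝ) :
    ∃ C : ℝ, 0 < C ∧ ∀ x : Fin n → ℝ, dotProduct x (M.mulVec x) ≤ C * ‖x‖ ^ 2 := by
  refine ⟨1 + ∑ i, ∑ j, |M i j|, by positivity, fun x => ?_⟩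
  have hx : ∀ i, |x i| ≤ ‖x‖ := fun i => by
    simpa using norm_le_pi_norm x i
  have h0 : (0:ℝ) ≤ ‖x‖ := norm_nonneg _
  calc dotProduct x (M.mulVec x) = ∑ i, ∑ j, x i * (M i j * x j) := by
        simp [dotProduct, Matrix.mulVec, Finset.mul_sum]
    _ ≤ ∑ i, ∑ j, |M i j| * ‖x‖ ^ 2 := by
        refine Finset.sum_le_sum fun i _ => Finset.sum_le_sum fun j _ => ?_
        have h1 : x i * (M i j * x j) ≤ |x i * (M i j * x j)| := le_abs_self _
        have h2 : |x i * (M i j * x j)| = |M i j| * (|x i| * |x j|) := by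
          rw [abs_mul, abs_mul]; ring
        have h3 : |x i| * |x j| ≤ ‖x‖ * ‖x‖ :=
          mul_le_mul (hx i) (hx j) (abs_nonneg _) h0
        have h4 : |M i j| * (|x i| * |x j|) ≤ |M i j| * (‖x‖ * ‖x‖) :=
          mul_le_mul_of_nonneg_left h3 (abs_nonneg _)
        calc x i * (M i j * x j) ≤ |M i j| * (|x i| * |x j|) := h2 ▸ h1
          _ ≤ |M i j| * (‖x‖ * ‖x‖) := h4
          _ = |M i j| * ‖x‖ ^ 2 := by ring
    _ ≤ (1 + ∑ i, ∑ j, |M i j|) * ‖x‖ ^ 2 := by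
        simp only [← Finset.sum_mul]
        nlinarith [Finset.sum_nonneg (fun i (_ : i ∈ Finset.univ) => Finset.sum_nonneg (fun j (_ : j ∈ Finset.univ) => abs_nonneg (M i j))), sq_nonneg ‖x‖]

lemma quad_lower_bound {n : ℕ} {M : Matrix (Fin n) (Fin n) ℝ} (hM : M.PosDef) :
    ∃ c : ℝ, 0 < c ∧ ∀ x : Fin n → ℝ, c * ‖x‖ ^ 2 ≤ dotProduct x (M.mulVec x) := by
  have hpos : ∀ x : Fin n → ℝ, x ≠ 0 → 0 < dotProduct x (M.mulVec x) := by
    intro x hx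
    simpa using hM.dotProduct_mulVec_pos hx
  rcases Nat.eq_zero_or_pos n with hn | hn
  · refine ⟨1, one_pos, fun x => ?_⟩
    have : x = 0 := funext fun i => absurd i.2 (by omega)
    simp [this]
  · have : Nonempty (Fin n) := ⟨⟨0, hn⟩⟩
    have hS : IsCompact (Metric.sphere (0 : Fin n → ℝ) 1) := isCompact_sphere _ _
    have hne : (Metric.sphere (0 : Fin n → ℝ) 1).Nonempty :=
      NormedSpace.sphere_nonempty.2 zero_le_one
    have hcont : Continuous fun x : Fin n → ℝ => dotProduct x (M.mulVec x) := by
      simp only [dotProduct, Matrix.mulVec, dotProduct]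
      fun_prop
    obtain ⟨x₀, hx₀S, hmin⟩ := hS.exists_isMinOn hne hcont.continuousOn
    have hx₀ : x₀ ≠ 0 := by
      intro h
      simp [h] at hx₀S
    refine ⟨dotProduct x₀ (M.mulVec x₀), hpos _ hx₀, fun x => ?_⟩
    rcases eq_or_ne x 0 with rfl | hx
    · simp
    · have ht : (0:ℝ) < ‖x‖ := norm_pos_iff.2 hx
      set u := ‖x‖⁻¹ • x with hu
      have hus : u ∈ Metric.sphere (0 : Fin n → ℝ) 1 := by
        simp [hu, norm_smul, abs_inv, abs_of_pos ht, inv_mul_cancel₀ ht.ne']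
      have hle : dotProduct x₀ (M.mulVec x₀) ≤ dotProduct u (M.mulVec u) := hmin hus
      have hq : dotProduct u (M.mulVec u) = ‖x‖⁻¹ * ‖x‖⁻¹ * dotProduct x (M.mulVec x) := by
        rw [hu, Matrix.mulVec_smul, smul_dotProduct, dotProduct_smul]
        simp [mul_assoc]
      rw [hq] at hle
      have h2 : dotProduct x₀ (M.mulVec x₀) * ‖x‖ ^ 2 ≤ dotProduct x (M.mulVec x) := by
        have h5 := mul_le_mul_of_nonneg_right hle (sq_nonneg ‖x‖)
        calc dotProduct x₀ (M.mulVec x₀) * ‖x‖ ^ 2 ≤ ‖x‖⁻¹ * ‖x‖⁻¹ * dotProduct x (M.mulVec x) * ‖x‖ ^ 2 := h5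
          _ = dotProduct x (M.mulVec x) := by rw [sq]; field_simp
      linarith

lemma mvtDensity_bounds {p : ℕ} (ξ : Fin p → ℝ) (S : Matrix (Fin p) (Fin p) ℝ) (hS : S.PosDef)
    (ν : ℝ) (hν : 0 < ν) :
    ∃ κ cq Cq : ℝ, 0 < κ ∧ 0 < cq ∧ 0 < Cq ∧
      ∀ x, κ * (1 + Cq * ‖x - ξ‖ ^ 2) ^ (-(ν + (p:ℝ)) / 2) ≤ mvtDensity ξ S ν x ∧
        mvtDensity ξ S ν x ≤ κ * (1 + cq * ‖x - ξ‖ ^ 2) ^ (-(ν + (p:ℝ)) / 2) := by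
  obtain ⟨c, hc, hcq⟩ := quad_lower_bound hS.inv
  obtain ⟨C, hC, hCq⟩ := quad_upper_bound S⁻¹
  have hcC : ∀ x : Fin p → ℝ, c * ‖x‖ ^ 2 ≤ C * ‖x‖ ^ 2 := fun x =>
    le_trans (hcq x) (hCq x)
  set κ := Real.Gamma ((ν + (p : ℝ)) / 2) /
      (Real.Gamma (ν / 2) * (ν * Real.pi) ^ ((p : ℝ) / 2) * Real.sqrt S.det) with hκdef
  have hκ : 0 < κ := by
    apply div_pos
    · exact Real.Gamma_pos_of_pos (by positivity)
    · exact mul_pos (mul_pos (Real.Gamma_pos_of_pos (by positivity))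
        (Real.rpow_pos_of_pos (by positivity) _)) (Real.sqrt_pos.2 hS.det_pos)
  refine ⟨κ, c / ν, C / ν, hκ, by positivity, by positivity, fun x => ?_⟩
  have h1 : (0:ℝ) < 1 + c / ν * ‖x - ξ‖ ^ 2 := by positivity
  have h2 : c / ν * ‖x - ξ‖ ^ 2 ≤ dotProduct (x - ξ) (S⁻¹.mulVec (x - ξ)) / ν := by
    rw [div_mul_eq_mul_div, div_le_div_iff_of_pos_right hν]
    exact hcq _
  have h3 : dotProduct (x - ξ) (S⁻¹.mulVec (x - ξ)) / ν ≤ C / ν * ‖x - ξ‖ ^ 2 := by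
    rw [div_mul_eq_mul_div, div_le_div_iff_of_pos_right hν]
    exact hCq _
  have he : -(ν + (p:ℝ)) / 2 ≤ 0 := by
    have : (0:ℝ) < ν + p := by positivity
    linarith
  have h1' : (0:ℝ) < 1 + dotProduct (x - ξ) (S⁻¹.mulVec (x - ξ)) / ν := by
    linarith
  constructor
  · unfold mvtDensity
    rw [← hκdef]
    refine mul_le_mul_of_nonneg_left ?_ hκ.le
    exact Real.rpow_le_rpow_of_nonpos h1' (by linarith) he
  · unfold mvtDensity
    rw [← hκdef]
    refine mul_le_mul_of_nonneg_left ?_ hκ.le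
    exact Real.rpow_le_rpow_of_nonpos h1 (by linarith) he

lemma mvt_continuous {p : ℕ} (ξ : Fin p → ℝ) (S : Matrix (Fin p) (Fin p) ℝ) (hS : S.PosDef)
    (ν : ℝ) (hν : 0 < ν) (k : Fin p → ℕ) :
    Continuous (fun x : Fin p → ℝ => (∏ i, x i ^ k i) * mvtDensity ξ S ν x) := by
  have hQcont : Continuous fun x : Fin p → ℝ =>
      dotProduct (x - ξ) (S⁻¹.mulVec (x - ξ)) := by
    simp only [dotProduct, Matrix.mulVec, Pi.sub_apply]
    fun_prop
  have hQnn : ∀ x : Fin p → ℝ, 0 ≤ dotProduct (x - ξ) (S⁻¹.mulVec (x - ξ)) := by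
    intro x
    simpa using hS.inv.posSemidef.dotProduct_mulVec_nonneg (x - ξ)
  have hbase : Continuous fun x : Fin p → ℝ =>
      1 + dotProduct (x - ξ) (S⁻¹.mulVec (x - ξ)) / ν := by fun_prop
  have hbne : ∀ x : Fin p → ℝ,
      1 + dotProduct (x - ξ) (S⁻¹.mulVec (x - ξ)) / ν ≠ 0 := by
    intro x
    have := hQnn x
    positivity
  unfold mvtDensity
  apply Continuous.mul
  · exact continuous_finset_prod _ fun i _ => (continuous_apply i).pow _
  · exact Continuous.mul continuous_const
      (hbase.rpow_const fun x => Or.inl (hbne x))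

lemma base_ineq {c t u : ℝ} (hc : 0 < c) (ht : 0 ≤ t) (h1 : c * t ^ 2 ≤ c * u ^ 2) :
    min 1 c / 2 * (1 + t) ^ 2 ≤ 1 + c * u ^ 2 := by
  have h2 : min 1 c ≤ 1 := min_le_left _ _
  have h3 : min 1 c ≤ c := min_le_right _ _
  have h4 : (0:ℝ) < min 1 c := lt_min one_pos hc
  nlinarith [sq_nonneg t, sq_nonneg (1 - t)]

set_option maxHeartbeats 2000000 in
/-- For a `p`-variate Student's `t` with positive definite scale `S` and
`ν > 0` degrees of freedom, truncation limits `α, β` that are both finite in `p₁` coordinates and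
have at least one infinite limit in the remaining coordinates, and `k ∈ ℕ^p` supported only on
the coordinates with an infinite limit, `E[X^k ∣ α ≤ X ≤ β]` exists iff `∑ᵢ kᵢ < ν + p₁`. -/
theorem stmt_10 {p : ℕ} (ξ : Fin p → ℝ) (S : Matrix (Fin p) (Fin p) ℝ) (hS : S.PosDef)
    (ν : ℝ) (hν : 0 < ν) (α β : Fin p → EReal) (hαβ : ∀ i, α i < β i)
    (hinf : ∃ i, α i = ⊥ ∨ β i = ⊤)
    (k : Fin p → ℕ)
    (hk : ∀ i, (α i ≠ ⊥ ∧ β i ≠ ⊤) → k i = 0) :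
    IntegrableOn (fun x => (∏ i, x i ^ k i) * mvtDensity ξ S ν x)
        {x : Fin p → ℝ | ∀ i, α i ≤ (x i : EReal) ∧ (x i : EReal) ≤ β i} ↔
      (∑ i, (k i : ℝ)) < ν + (Nat.card {i : Fin p // α i ≠ ⊥ ∧ β i ≠ ⊤} : ℝ) := by
  classical
  set P : Fin p → Prop := fun i => α i ≠ ⊥ ∧ β i ≠ ⊤ with hPdef
  set E : Set (Fin p → ℝ) := {x | ∀ i, α i ≤ (x i : EReal) ∧ (x i : EReal) ≤ β i} with hEdef
  set f : (Fin p → ℝ) → ℝ := fun x => (∏ i, x i ^ k i) * mvtDensity ξ S ν x with hfdef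
  set p₁ : ℕ := Fintype.card {i // P i} with hp₁
  set p₂ : ℕ := Fintype.card {i // ¬ P i} with hp₂
  have hcard : (Nat.card {i : Fin p // α i ≠ ⊥ ∧ β i ≠ ⊤} : ℝ) = (p₁ : ℝ) := by
    rw [Nat.card_eq_fintype_card]
  have hp12 : p₁ + p₂ = p := by
    have h := Fintype.card_congr (Equiv.sumCompl P)
    rw [Fintype.card_sum, Fintype.card_fin] at h
    exact h
  set m : ℕ := ∑ i, k i with hm
  have hsum : (∑ i, (k i : ℝ)) = (m : ℝ) := by push_cast [hm]; rfl
  rw [hcard, hsum]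
  -- endpoints for the `P` coordinates
  set a : Fin p → ℝ := fun i => (α i).toReal with ha
  set b : Fin p → ℝ := fun i => (β i).toReal with hb
  have hαtop : ∀ i, α i ≠ ⊤ := fun i => (lt_top_iff_ne_top.1 (lt_of_lt_of_le (hαβ i) le_top))
  have hβbot : ∀ i, β i ≠ ⊥ := fun i => (bot_lt_iff_ne_bot.1 (lt_of_le_of_lt bot_le (hαβ i)))
  have hacoe : ∀ i, P i → ((a i : ℝ) : EReal) = α i := fun i hi =>
    EReal.coe_toReal (hαtop i) hi.1
  have hbcoe : ∀ i, P i → ((b i : ℝ) : EReal) = β i := fun i hi =>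
    EReal.coe_toReal hi.2 (hβbot i)
  have hab : ∀ i, P i → a i < b i := by
    intro i hi
    have h := hαβ i
    rw [← hacoe i hi, ← hbcoe i hi] at h
    exact_mod_cast h
  -- in `E`, finite coordinates lie in `Icc (a i) (b i)`
  have hmemE : ∀ x ∈ E, ∀ i, P i → x i ∈ Set.Icc (a i) (b i) := by
    intro x hx i hi
    obtain ⟨h1, h2⟩ := hx i
    rw [← hacoe i hi] at h1
    rw [← hbcoe i hi] at h2
    exact ⟨by exact_mod_cast h1, by exact_mod_cast h2⟩
  have hEclosed : IsClosed E := by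
    have : E = ⋂ i, ((fun x : Fin p → ℝ => ((x i : ℝ) : EReal)) ⁻¹' Set.Icc (α i) (β i)) := by
      ext x
      simp [hEdef, Set.mem_iInter, Set.mem_Icc]
    rw [this]
    refine isClosed_iInter fun i => IsClosed.preimage
      (continuous_coe_real_ereal.comp (continuous_apply i)) isClosed_Icc
  have hEmeas : MeasurableSet E := hEclosed.measurableSet
  have hfcont : Continuous f := mvt_continuous ξ S hS ν hν k
  obtain ⟨κ, cq, Cq, hκ, hcq, hCq, hbounds⟩ := mvtDensity_bounds ξ S hS ν hν
  set s : ℝ := ν + (p : ℝ) with hs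
  have hs0 : 0 < s := by positivity
  have hdens_nonneg : ∀ x, 0 ≤ mvtDensity ξ S ν x := by
    intro x
    refine le_trans ?_ (hbounds x).1
    positivity
  set ξI : {i // ¬ P i} → ℝ := fun i => ξ i.1 with hξI
  set A : ℝ := ‖ξI‖ with hA
  have hA0 : 0 ≤ A := norm_nonneg _
  constructor
  · -- necessity
    intro hint
    by_contra hlt
    push_neg at hlt
    -- hlt : ν + ↑p₁ ≤ ↑m
    obtain ⟨i₀, hi₀⟩ := hinf
    have hnPi₀ : ¬ P i₀ := fun h => hi₀.elim (fun he => h.1 he) (fun he => h.2 he)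
    set R : ℝ := 1 + ∑ i, (|(α i).toReal| + |(β i).toReal|) with hR
    have hsumnn : (0:ℝ) ≤ ∑ i, (|(α i).toReal| + |(β i).toReal|) :=
      Finset.sum_nonneg fun i _ => by positivity
    have hR1 : 1 ≤ R := by rw [hR]; linarith
    have hR0 : 0 < R := by linarith
    have hterm : ∀ i : Fin p, |(α i).toReal| + |(β i).toReal| ≤ R - 1 := by
      intro i
      rw [hR]
      have := Finset.single_le_sum (f := fun i : Fin p => |(α i).toReal| + |(β i).toReal|)
        (fun j _ => by positivity) (Finset.mem_univ i)
      linarith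
    have hRα : ∀ i, |(α i).toReal| ≤ R := fun i => by
      have := hterm i; have : |(α i).toReal| + |(β i).toReal| ≤ R - 1 := hterm i
      have h2 : (0:ℝ) ≤ |(β i).toReal| := abs_nonneg _
      linarith
    have hRβ : ∀ i, |(β i).toReal| ≤ R := fun i => by
      have : |(α i).toReal| + |(β i).toReal| ≤ R - 1 := hterm i
      have h2 : (0:ℝ) ≤ |(α i).toReal| := abs_nonneg _
      linarith
    have h2pow : ∀ n : ℕ, (1:ℝ) ≤ 2 ^ n := fun n => one_le_pow₀ (by norm_num)
    have hR2n : ∀ n : ℕ, R ≤ R * 2 ^ n := fun n =>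
      le_mul_of_one_le_right hR0.le (h2pow n)
    have hR2n0 : ∀ n : ℕ, (0:ℝ) < R * 2 ^ n := fun n => by positivity
    set J : Fin p → ℕ → Set ℝ := fun i n =>
      if P i then Set.Icc (a i) (b i)
      else if β i = ⊤ then Set.Ico (R * 2 ^ n) (R * 2 ^ (n + 1))
      else Set.Ioc (-(R * 2 ^ (n + 1))) (-(R * 2 ^ n)) with hJ
    set T : ℕ → Set (Fin p → ℝ) := fun n => Set.pi Set.univ (fun i => J i n) with hT
    have hJmeas : ∀ i n, MeasurableSet (J i n) := by
      intro i n
      simp only [hJ]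
      split_ifs
      · exact measurableSet_Icc
      · exact measurableSet_Ico
      · exact measurableSet_Ioc
    have hTmeas : ∀ n, MeasurableSet (T n) := fun n =>
      MeasurableSet.univ_pi fun i => hJmeas i n
    have hTsubE : ∀ n, T n ⊆ E := by
      intro n x hx i
      have hxi : x i ∈ J i n := hx i (Set.mem_univ i)
      simp only [hJ] at hxi
      by_cases hi : P i
      · rw [if_pos hi] at hxi
        constructor
        · rw [← hacoe i hi]; exact_mod_cast hxi.1
        · rw [← hbcoe i hi]; exact_mod_cast hxi.2
      · rw [if_neg hi] at hxi
        by_cases hβi : β i = ⊤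
        · rw [if_pos hβi] at hxi
          constructor
          · rcases eq_or_ne (α i) ⊥ with hbot | hbot
            · rw [hbot]; exact bot_le
            · rw [← EReal.coe_toReal (hαtop i) hbot]
              have h1 : (α i).toReal ≤ R * 2 ^ n := by
                have := hRα i
                have h2 := hR2n n
                have := le_abs_self (α i).toReal
                linarith
              exact_mod_cast le_trans h1 hxi.1
          · rw [hβi]; exact le_top
        · rw [if_neg hβi] at hxi
          have hα : α i = ⊥ := by
            rcases not_and_or.1 hi with h | h
            · exact not_not.1 h
            · exact absurd (not_not.1 h) hβi
          constructor
          · rw [hα]; exact bot_le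
          · rw [← EReal.coe_toReal hβi (hβbot i)]
            have h1 : x i ≤ -(R * 2 ^ n) := hxi.2
            have h2 : -(R * 2 ^ n) ≤ -R := by linarith [hR2n n]
            have h3 : -R ≤ (β i).toReal := by
              have := hRβ i
              have := neg_abs_le (β i).toReal
              linarith
            exact_mod_cast le_trans h1 (le_trans h2 h3)
    have hTdisj : Pairwise (Function.onFun Disjoint T) := by
      intro n n' hne
      rw [Function.onFun]
      rw [Set.disjoint_left]
      intro x hxn hxn'
      have h1 : x i₀ ∈ J i₀ n := hxn i₀ (Set.mem_univ i₀)
      have h2 : x i₀ ∈ J i₀ n' := hxn' i₀ (Set.mem_univ i₀)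
      simp only [hJ] at h1 h2
      rw [if_neg hnPi₀] at h1 h2
      have key : ∀ q q' : ℕ, R * 2 ^ q < R * 2 ^ (q' + 1) → q ≤ q' := by
        intro q q' h
        have h3 : (2:ℝ) ^ q < 2 ^ (q' + 1) := (mul_lt_mul_iff_right₀ hR0).1 h
        have h4 : q < q' + 1 := by
          by_contra hc
          push_neg at hc
          exact absurd (pow_le_pow_right₀ (by norm_num) hc) (not_le.2 h3)
        omega
      apply hne
      by_cases hβi : β i₀ = ⊤
      · rw [if_pos hβi] at h1 h2
        have ha1 : R * 2 ^ n < R * 2 ^ (n' + 1) := lt_of_le_of_lt h1.1 h2.2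
        have ha2 : R * 2 ^ n' < R * 2 ^ (n + 1) := lt_of_le_of_lt h2.1 h1.2
        exact le_antisymm (key _ _ ha1) (key _ _ ha2)
      · rw [if_neg hβi] at h1 h2
        have ha1 : R * 2 ^ n < R * 2 ^ (n' + 1) := by
          have := h1.2; have := h2.1; linarith
        have ha2 : R * 2 ^ n' < R * 2 ^ (n + 1) := by
          have := h2.2; have := h1.1; linarith
        exact le_antisymm (key _ _ ha1) (key _ _ ha2)
    -- volume of T n
    set len : Fin p → ℕ → ℝ := fun i n => if P i then b i - a i else R * 2 ^ n with hlen
    have hlen_nn : ∀ i n, 0 ≤ len i n := by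
      intro i n
      simp only [hlen]
      split_ifs with hi
      · linarith [hab i hi]
      · positivity
    have hTvol : ∀ n, volume (T n) = ENNReal.ofReal (∏ i, len i n) := by
      intro n
      rw [hT, volume_pi_pi]
      rw [ENNReal.ofReal_prod_of_nonneg (fun i _ => hlen_nn i n)]
      refine Finset.prod_congr rfl fun i _ => ?_
      simp only [hJ, hlen]
      split_ifs with hi hβi
      · exact Real.volume_Icc
      · rw [Real.volume_Ico]
        congr 1
        rw [pow_succ]
        ring
      · rw [Real.volume_Ioc]
        congr 1
        rw [pow_succ]
        ring
    -- pointwise lower bound on T n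
    set B : ℝ := ∑ i, (|a i| + |b i|) with hB
    have hB0 : 0 ≤ B := Finset.sum_nonneg fun i _ => by positivity
    have hBi : ∀ i, |a i| + |b i| ≤ B :=
      fun i => Finset.single_le_sum (f := fun i : Fin p => |a i| + |b i|)
        (fun j _ => by positivity) (Finset.mem_univ i)
    set D : ℝ := B + ‖ξ‖ + 2 * R with hD
    have hD0 : 0 < D := by
      have := norm_nonneg ξ
      rw [hD]; linarith
    set W : ℝ := 1 + Cq * D ^ 2 with hW
    have hW0 : 0 < W := by rw [hW]; positivity
    have hxnorm : ∀ n, ∀ x ∈ T n, ‖x - ξ‖ ≤ D * 2 ^ n := by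
      intro n x hx
      have hxn : ‖x‖ ≤ B + R * 2 ^ (n + 1) := by
        refine (pi_norm_le_iff_of_nonneg (by positivity)).2 fun i => ?_
        have hxi : x i ∈ J i n := hx i (Set.mem_univ i)
        simp only [hJ] at hxi
        rw [Real.norm_eq_abs]
        split_ifs at hxi with hi hβi
        · have h1 := hxi.1
          have h2 := hxi.2
          have h3 := hBi i
          have h4 := neg_abs_le (a i)
          have h5 := le_abs_self (b i)
          have h6 := hR2n0 (n+1)
          rw [abs_le]
          constructor <;> linarith [abs_nonneg (a i), abs_nonneg (b i)]
        · have h1 := hxi.1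
          have h2 := hxi.2
          have h6 := hR2n0 n
          rw [abs_le]
          constructor <;> linarith
        · have h1 := hxi.1
          have h2 := hxi.2
          have h6 := hR2n0 n
          rw [abs_le]
          constructor <;> linarith
      have h7 : ‖x - ξ‖ ≤ ‖x‖ + ‖ξ‖ := norm_sub_le _ _
      have h8 : R * 2 ^ (n + 1) = 2 * R * 2 ^ n := by rw [pow_succ]; ring
      have h9 : B + ‖ξ‖ ≤ (B + ‖ξ‖) * 2 ^ n := by
        refine le_mul_of_one_le_right ?_ (h2pow n)
        have := norm_nonneg ξ
        linarith
      rw [hD]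
      have h10 : (B + ‖ξ‖) * 2 ^ n + 2 * R * 2 ^ n = (B + ‖ξ‖ + 2 * R) * 2 ^ n := by ring
      linarith
    have hdens_lb : ∀ n, ∀ x ∈ T n,
        κ * W ^ (-s / 2) * ((2:ℝ) ^ n) ^ (-s) ≤ mvtDensity ξ S ν x := by
      intro n x hx
      refine le_trans ?_ (hbounds x).1
      have ht2 : (0:ℝ) < (2:ℝ) ^ n := by positivity
      have hb1 : 1 + Cq * ‖x - ξ‖ ^ 2 ≤ W * ((2:ℝ) ^ n) ^ 2 := by
        have h1 := hxnorm n x hx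
        have h2 : ‖x - ξ‖ ^ 2 ≤ (D * 2 ^ n) ^ 2 := by
          have := norm_nonneg (x - ξ)
          nlinarith
        have h3 : (1:ℝ) ≤ ((2:ℝ) ^ n) ^ 2 := by nlinarith [h2pow n]
        rw [hW]
        nlinarith [hCq.le, sq_nonneg ((2:ℝ)^n)]
      have hb0 : (0:ℝ) < 1 + Cq * ‖x - ξ‖ ^ 2 := by positivity
      have h4 : (W * ((2:ℝ) ^ n) ^ 2) ^ (-s / 2) ≤ (1 + Cq * ‖x - ξ‖ ^ 2) ^ (-s / 2) :=
        Real.rpow_le_rpow_of_nonpos hb0 hb1 (by linarith)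
      have h5 : (W * ((2:ℝ) ^ n) ^ 2) ^ (-s / 2) = W ^ (-s / 2) * ((2:ℝ) ^ n) ^ (-s) := by
        rw [Real.mul_rpow hW0.le (by positivity)]
        congr 1
        rw [← Real.rpow_natCast ((2:ℝ) ^ n) 2, ← Real.rpow_mul ht2.le]
        congr 1
        ring
      rw [mul_assoc, ← h5]
      exact mul_le_mul_of_nonneg_left h4 hκ.le
    have hprod_lb : ∀ n, ∀ x ∈ T n, (R * 2 ^ n) ^ m ≤ |∏ i, x i ^ k i| := by
      intro n x hx
      rw [Finset.abs_prod]
      have h1 : ∀ i : Fin p, (R * 2 ^ n) ^ (k i) ≤ |x i ^ k i| := by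
        intro i
        rw [abs_pow]
        by_cases hi : P i
        · rw [hk i hi]
          simp
        · have hxi : x i ∈ J i n := hx i (Set.mem_univ i)
          simp only [hJ] at hxi
          rw [if_neg hi] at hxi
          have h2 : R * 2 ^ n ≤ |x i| := by
            split_ifs at hxi with hβi
            · have := hxi.1
              have h3 := le_abs_self (x i)
              linarith
            · have := hxi.2
              have h3 := neg_abs_le (x i)
              linarith
          exact pow_le_pow_left₀ (hR2n0 n).le h2 _
      calc (R * 2 ^ n) ^ m = ∏ i, (R * 2 ^ n) ^ (k i) := by
            rw [Finset.prod_pow_eq_pow_sum]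
      _ ≤ ∏ i, |x i ^ k i| :=
            Finset.prod_le_prod (fun i _ => by positivity) (fun i _ => h1 i)
    -- the constant
    set V₁ : ℝ := ∏ i ∈ Finset.univ.filter P, (b i - a i) with hV₁
    have hV₁0 : 0 < V₁ := Finset.prod_pos fun i hi =>
      sub_pos.2 (hab i (Finset.mem_filter.1 hi).2)
    set κ₂ : ℝ := κ * W ^ (-s / 2) * V₁ * R ^ ((m:ℝ) + (p₂:ℝ)) with hκ₂
    have hκ₂0 : 0 < κ₂ := by
      rw [hκ₂]
      have h1 := Real.rpow_pos_of_pos hW0 (-s / 2)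
      have h2 := Real.rpow_pos_of_pos hR0 ((m:ℝ) + (p₂:ℝ))
      positivity
    have hVn : ∀ n, ∏ i, len i n = V₁ * (R * 2 ^ n) ^ p₂ := by
      intro n
      rw [Finset.prod_ite (f := fun i => b i - a i) (g := fun _ => R * 2 ^ n)]
      congr 1
      rw [Finset.prod_const]
      congr 1
      rw [hp₂, Fintype.card_subtype]
    have hκ₂Vn : ∀ n, κ₂ ≤
        ((R * 2 ^ n) ^ m * (κ * W ^ (-s / 2) * ((2:ℝ) ^ n) ^ (-s))) * (∏ i, len i n) := by
      intro n
      rw [hVn]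
      have ht2 : (0:ℝ) < (2:ℝ) ^ n := by positivity
      have hRt2 : (0:ℝ) < R * 2 ^ n := hR2n0 n
      have e1 : ((R * 2 ^ n) ^ m * (κ * W ^ (-s / 2) * ((2:ℝ) ^ n) ^ (-s))) *
          (V₁ * (R * 2 ^ n) ^ p₂) =
          (κ * W ^ (-s / 2) * V₁) *
            ((R * 2 ^ n) ^ ((m:ℝ) + (p₂:ℝ)) * ((2:ℝ) ^ n) ^ (-s)) := by
        rw [Real.rpow_add hRt2, Real.rpow_natCast, Real.rpow_natCast]
        ring
      rw [e1]
      have e2 : (R * 2 ^ n) ^ ((m:ℝ) + (p₂:ℝ)) * ((2:ℝ) ^ n) ^ (-s) =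
          R ^ ((m:ℝ) + (p₂:ℝ)) * ((2:ℝ) ^ n) ^ ((m:ℝ) + (p₂:ℝ) - s) := by
        rw [Real.mul_rpow hR0.le ht2.le, Real.rpow_sub ht2, Real.rpow_neg ht2.le]
        ring
      rw [e2]
      have e3 : (1:ℝ) ≤ ((2:ℝ) ^ n) ^ ((m:ℝ) + (p₂:ℝ) - s) := by
        refine Real.one_le_rpow (h2pow n) ?_
        have hcast : (p:ℝ) = (p₁:ℝ) + (p₂:ℝ) := by exact_mod_cast hp12.symm
        rw [hs]
        linarith
      have h6 : (0:ℝ) < R ^ ((m:ℝ) + (p₂:ℝ)) := Real.rpow_pos_of_pos hR0 _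
      have h7 : (0:ℝ) < κ * W ^ (-s / 2) * V₁ := by
        have := Real.rpow_pos_of_pos hW0 (-s / 2)
        positivity
      rw [hκ₂]
      calc κ * W ^ (-s / 2) * V₁ * R ^ ((m:ℝ) + (p₂:ℝ))
          = (κ * W ^ (-s / 2) * V₁) * (R ^ ((m:ℝ) + (p₂:ℝ)) * 1) := by ring
        _ ≤ (κ * W ^ (-s / 2) * V₁) * (R ^ ((m:ℝ) + (p₂:ℝ)) *
              ((2:ℝ) ^ n) ^ ((m:ℝ) + (p₂:ℝ) - s)) := by
            refine mul_le_mul_of_nonneg_left ?_ h7.le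
            exact mul_le_mul_of_nonneg_left e3 h6.le
    -- lower bound the integral over each T n
    have hfm : Measurable fun x : Fin p → ℝ => (‖f x‖₊ : ℝ≥0∞) :=
      hfcont.measurable.nnnorm.coe_nnreal_ennreal
    have hInt : ∀ n : ℕ, ENNReal.ofReal κ₂ ≤ ∫⁻ x in T n, ‖f x‖₊ := by
      intro n
      have hlb : ∀ x ∈ T n,
          ENNReal.ofReal ((R * 2 ^ n) ^ m * (κ * W ^ (-s / 2) * ((2:ℝ) ^ n) ^ (-s)))
            ≤ (‖f x‖₊ : ℝ≥0∞) := by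
        intro x hx
        rw [← enorm_eq_nnnorm, Real.enorm_eq_ofReal_abs]
        refine ENNReal.ofReal_le_ofReal ?_
        simp only [hfdef]
        rw [abs_mul, abs_of_nonneg (hdens_nonneg x)]
        refine mul_le_mul (hprod_lb n x hx) ?_ ?_ (abs_nonneg _)
        · exact hdens_lb n x hx
        · have h1 := Real.rpow_pos_of_pos hW0 (-s / 2)
          have ht2 : (0:ℝ) < (2:ℝ) ^ n := by positivity
          have h2 := Real.rpow_pos_of_pos ht2 (-s)
          positivity
      calc ENNReal.ofReal κ₂
          ≤ ENNReal.ofReal (((R * 2 ^ n) ^ m * (κ * W ^ (-s / 2) * ((2:ℝ) ^ n) ^ (-s))) *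
              (∏ i, len i n)) := ENNReal.ofReal_le_ofReal (hκ₂Vn n)
        _ = ENNReal.ofReal ((R * 2 ^ n) ^ m * (κ * W ^ (-s / 2) * ((2:ℝ) ^ n) ^ (-s))) *
              volume (T n) := by
            rw [hTvol n, ← ENNReal.ofReal_mul]
            have h1 := Real.rpow_pos_of_pos hW0 (-s / 2)
            have ht2 : (0:ℝ) < (2:ℝ) ^ n := by positivity
            have h2 := Real.rpow_pos_of_pos ht2 (-s)
            positivity
        _ = ∫⁻ _ in T n, ENNReal.ofReal ((R * 2 ^ n) ^ m *
              (κ * W ^ (-s / 2) * ((2:ℝ) ^ n) ^ (-s))) := by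
            rw [setLIntegral_const]
        _ ≤ ∫⁻ x in T n, ‖f x‖₊ := setLIntegral_mono hfm hlb
    -- conclude
    have hfin : (∫⁻ x in E, ‖f x‖₊) < ⊤ := hint.2
    have hunion : (∫⁻ x in ⋃ n, T n, ‖f x‖₊) ≤ ∫⁻ x in E, ‖f x‖₊ :=
      lintegral_mono_set (Set.iUnion_subset hTsubE)
    have hsum' : (∫⁻ x in ⋃ n, T n, ‖f x‖₊) = ∑' n, ∫⁻ x in T n, ‖f x‖₊ :=
      lintegral_iUnion hTmeas hTdisj _
    have htop : (∑' _ : ℕ, ENNReal.ofReal κ₂) ≤ ∑' n, ∫⁻ x in T n, ‖f x‖₊ :=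
      ENNReal.tsum_le_tsum hInt
    rw [ENNReal.tsum_const_eq_top_of_ne_zero (by
      simp [ENNReal.ofReal_eq_zero, not_le, hκ₂0])] at htop
    rw [hsum'] at hunion
    exact absurd (lt_of_le_of_lt (le_trans htop hunion) hfin) (by simp)
  · -- sufficiency
    intro hmlt
    set r : ℝ := s - m with hr
    have hp2r : (p₂ : ℝ) < r := by
      have : (p : ℝ) = (p₁ : ℝ) + (p₂ : ℝ) := by exact_mod_cast hp12.symm
      rw [hr, hs]
      linarith
    set ε : ℝ := min 1 cq / 2 with hε
    have hε0 : 0 < ε := by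
      rw [hε]
      have : (0:ℝ) < min 1 cq := lt_min one_pos hcq
      linarith
    set K : ℝ := κ * ε ^ (-s / 2) * (1 + A) ^ s with hK
    have hK0 : 0 < K := by
      rw [hK]
      have h1 : (0:ℝ) < ε ^ (-s / 2) := Real.rpow_pos_of_pos hε0 _
      have h2 : (0:ℝ) < (1 + A) ^ s := Real.rpow_pos_of_pos (by linarith) _
      positivity
    set g₁ : ({i // P i} → ℝ) → ℝ :=
      Set.indicator (Set.univ.pi fun i : {i // P i} => Set.Icc (a i.1) (b i.1))
        (fun _ => (1:ℝ)) with hg₁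
    set g₂ : ({i // ¬ P i} → ℝ) → ℝ := fun y => K * (1 + ‖y‖) ^ (-r) with hg₂
    have hg₁int : Integrable g₁ := by
      rw [hg₁, integrable_indicator_iff (MeasurableSet.univ_pi fun i => measurableSet_Icc)]
      refine integrableOn_const ?_
      exact (isCompact_univ_pi fun i => isCompact_Icc).measure_lt_top.ne
    have hg₂int : Integrable g₂ := by
      have hfr : (Module.finrank ℝ ({i // ¬ P i} → ℝ) : ℝ) < r := by
        rw [Module.finrank_fintype_fun_eq_card]
        exact hp2r
      exact (integrable_one_add_norm hfr).const_mul K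
    have hGprod : Integrable (fun z : ({i // P i} → ℝ) × ({i // ¬ P i} → ℝ) =>
        g₁ z.1 * g₂ z.2) := hg₁int.mul_prod hg₂int
    set φ := MeasurableEquiv.piEquivPiSubtypeProd (fun _ : Fin p => ℝ) P with hφ
    have vp : MeasurePreserving φ volume volume :=
      volume_preserving_piEquivPiSubtypeProd (fun _ : Fin p => ℝ) P
    have hG : Integrable (fun x : Fin p → ℝ => g₁ (φ x).1 * g₂ (φ x).2) := by
      exact (vp.integrable_comp hGprod.aestronglyMeasurable).2 hGprod
    refine Integrable.mono' hG.restrict hfcont.aestronglyMeasurable.restrict ?_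
    rw [ae_restrict_iff' hEmeas]
    refine ae_of_all _ fun x hx => ?_
    -- pointwise bound
    have hφx1 : (φ x).1 = fun i : {i // P i} => x i.1 := rfl
    have hφx2 : (φ x).2 = fun i : {i // ¬ P i} => x i.1 := rfl
    set y : {i // ¬ P i} → ℝ := fun i => x i.1 with hy
    have hg₁x : g₁ (φ x).1 = 1 := by
      rw [hg₁, hφx1]
      refine Set.indicator_of_mem ?_ _
      rw [Set.mem_univ_pi]
      exact fun i => hmemE x hx i.1 i.2
    set t : ℝ := ‖y - ξI‖ with htdef
    have ht0 : 0 ≤ t := norm_nonneg _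
    have ht_le : t ≤ ‖x - ξ‖ := by
      rw [htdef]
      refine (pi_norm_le_iff_of_nonneg (norm_nonneg _)).2 fun i => ?_
      have : (y - ξI) i = (x - ξ) i.1 := rfl
      rw [this]
      exact norm_le_pi_norm (x - ξ) i.1
    have hynorm : ‖y‖ ≤ t + A := by
      calc ‖y‖ = ‖(y - ξI) + ξI‖ := by rw [sub_add_cancel]
        _ ≤ ‖y - ξI‖ + ‖ξI‖ := norm_add_le _ _
    -- base inequality
    have hbase : ε * (1 + t) ^ 2 ≤ 1 + cq * ‖x - ξ‖ ^ 2 := by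
      have h1 : cq * t ^ 2 ≤ cq * ‖x - ξ‖ ^ 2 := by
        have h5 := mul_self_le_mul_self ht0 ht_le
        have h6 : t ^ 2 ≤ ‖x - ξ‖ ^ 2 := by rw [sq, sq]; exact h5
        exact mul_le_mul_of_nonneg_left h6 hcq.le
      rw [hε]
      exact base_ineq hcq ht0 h1
    have hdens : mvtDensity ξ S ν x ≤ κ * (ε * (1 + t) ^ 2) ^ (-s / 2) := by
      refine le_trans (hbounds x).2 ?_
      refine mul_le_mul_of_nonneg_left ?_ hκ.le
      have hb0 : (0:ℝ) < ε * (1 + t) ^ 2 := by positivity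
      exact Real.rpow_le_rpow_of_nonpos hb0 hbase (by linarith)
    have hsplit : (ε * (1 + t) ^ 2) ^ (-s / 2) = ε ^ (-s / 2) * (1 + t) ^ (-s) := by
      rw [Real.mul_rpow hε0.le (by positivity)]
      congr 1
      rw [← Real.rpow_natCast (1 + t) 2, ← Real.rpow_mul (by linarith)]
      congr 1
      ring
    have hstep4 : (1 + t) ^ (-s) ≤ (1 + A) ^ s * (1 + ‖y‖) ^ (-s) := by
      have h1 : (0:ℝ) < 1 + ‖y‖ := by positivity
      have h2 : (0:ℝ) < 1 + A := by linarith
      have h3 : (1 + ‖y‖) / (1 + A) ≤ 1 + t := by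
        rw [div_le_iff₀ h2]
        nlinarith [norm_nonneg y]
      have h4 : (0:ℝ) < (1 + ‖y‖) / (1 + A) := by positivity
      calc (1 + t) ^ (-s) ≤ ((1 + ‖y‖) / (1 + A)) ^ (-s) :=
            Real.rpow_le_rpow_of_nonpos h4 h3 (by linarith)
        _ = (1 + A) ^ s * (1 + ‖y‖) ^ (-s) := by
            rw [Real.div_rpow h1.le h2.le, Real.rpow_neg h2.le s]
            field_simp
    have hprod : |∏ i, x i ^ k i| ≤ (1 + ‖y‖) ^ (m : ℝ) := by
      rw [Finset.abs_prod]
      have h1 : ∀ i : Fin p, |x i ^ k i| ≤ (1 + ‖y‖) ^ (k i) := by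
        intro i
        rw [abs_pow]
        by_cases hi : P i
        · rw [hk i hi]
          simp
        · have hxi : |x i| ≤ ‖y‖ := by
            have := norm_le_pi_norm y ⟨i, hi⟩
            simpa [hy] using this
          exact pow_le_pow_left₀ (abs_nonneg _) (by nlinarith [norm_nonneg y]) _
      calc ∏ i, |x i ^ k i| ≤ ∏ i, (1 + ‖y‖) ^ (k i) :=
            Finset.prod_le_prod (fun i _ => abs_nonneg _) (fun i _ => h1 i)
        _ = (1 + ‖y‖) ^ m := by rw [← Finset.prod_pow_eq_pow_sum]
        _ = (1 + ‖y‖) ^ (m : ℝ) := (Real.rpow_natCast _ m).symm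
    -- combine
    have hyn : (0:ℝ) < 1 + ‖y‖ := by positivity
    have final : ‖f x‖ ≤ K * (1 + ‖y‖) ^ (-r) := by
      rw [hfdef]
      simp only [norm_mul, Real.norm_eq_abs]
      rw [abs_of_nonneg (hdens_nonneg x)]
      calc |∏ i, x i ^ k i| * mvtDensity ξ S ν x
          ≤ (1 + ‖y‖) ^ (m : ℝ) * (κ * (ε ^ (-s / 2) * ((1 + A) ^ s * (1 + ‖y‖) ^ (-s)))) := by
            refine mul_le_mul hprod ?_ (hdens_nonneg x) (by positivity)
            refine le_trans hdens ?_
            rw [hsplit]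
            refine mul_le_mul_of_nonneg_left ?_ hκ.le
            exact mul_le_mul_of_nonneg_left hstep4 (Real.rpow_pos_of_pos hε0 _).le
        _ = K * ((1 + ‖y‖) ^ (m : ℝ) * (1 + ‖y‖) ^ (-s)) := by rw [hK]; ring
        _ = K * (1 + ‖y‖) ^ (-r) := by
            rw [← Real.rpow_add hyn]
            congr 1
            rw [hr]
            ring
    calc ‖f x‖ ≤ K * (1 + ‖y‖) ^ (-r) := final
      _ = g₁ (φ x).1 * g₂ (φ x).2 := by rw [hg₁x, hg₂, one_mul, hφx2]
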